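/- arXiv:2103.10086 — 5 statements merged into one kernel-verified Lean document; each statement's English description precedes it below -/
import Mathlib

section
/- Let β, β̃ ∈ ℂ^K with ‖β − β̃‖_∞ ≤ δ. Then the Vandermonde matrices satisfy ‖V_L(β̃) − V_L(β)‖_∞ ≤ √2 · K · L · ρ_{|β|+δ𝟙}^{L−1} · δ, where ‖·‖_∞ is the maximum-row-sum operator norm. -/
/-!
Factoring `x ^ n - y ^ n = (x - y) * ∑ i < n, x ^ i * y ^ (n - 1 - i)` bounds every entry of
`V_L(β̃) - V_L(β)` by `L ρ ^ (L - 1) δ`, where `ρ = ρ_{|β| + δ𝟙}` dominates both `|β_k|` and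
`|β̃_k| ≤ |β_k| + δ`; summing a row gives the claim even without the factor `√2`, which the
complex mean value theorem would cost.
-/

open Finset

/-- The rectangular Vandermonde matrix `V_L(β) = (β_k^ℓ)`. -/
noncomputable def vand (L : ℕ) {K : ℕ} (β : Fin K → ℂ) : Matrix (Fin L) (Fin K) ℂ :=
  fun ℓ k => β k ^ (ℓ : ℕ)

/-- `ρ_v = max {1, max_k |v_k|}` for a real vector. -/
noncomputable def rhoR {K : ℕ} (v : Fin K → ℝ) : ℝ := max 1 (⨆ k, |v k|)

theorem norm_pow_sub_pow_le {R : Type*} [NormedCommRing R] [NormOneClass R] {x y : R} {ρ : ℝ}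
    (hx : ‖x‖ ≤ ρ) (hy : ‖y‖ ≤ ρ) (n : ℕ) :
    ‖x ^ n - y ^ n‖ ≤ n * ρ ^ (n - 1) * ‖x - y‖ := by
  have hρ : 0 ≤ ρ := (norm_nonneg x).trans hx
  rw [← geom_sum₂_mul]
  refine (norm_mul_le _ _).trans (mul_le_mul_of_nonneg_right ?_ (norm_nonneg _))
  have hterm : ∀ i ∈ range n, ‖x ^ i * y ^ (n - 1 - i)‖ ≤ ρ ^ (n - 1) := fun i hi => by
    have hi : i + (n - 1 - i) = n - 1 := by have := mem_range.mp hi; omega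
    calc ‖x ^ i * y ^ (n - 1 - i)‖ ≤ ‖x‖ ^ i * ‖y‖ ^ (n - 1 - i) :=
          (norm_mul_le _ _).trans (mul_le_mul (norm_pow_le _ _) (norm_pow_le _ _)
            (norm_nonneg _) (by positivity))
      _ ≤ ρ ^ i * ρ ^ (n - 1 - i) := by gcongr
      _ = ρ ^ (n - 1) := by rw [← pow_add, hi]
  calc ‖∑ i ∈ range n, x ^ i * y ^ (n - 1 - i)‖ ≤ ∑ i ∈ range n, ‖x ^ i * y ^ (n - 1 - i)‖ :=
        norm_sum_le _ _
    _ ≤ n * ρ ^ (n - 1) := by simpa using sum_le_card_nsmul _ _ _ hterm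

theorem one_le_rhoR {K : ℕ} (v : Fin K → ℝ) : 1 ≤ rhoR v := le_max_left _ _

theorem abs_le_rhoR {K : ℕ} (v : Fin K → ℝ) (k : Fin K) : |v k| ≤ rhoR v :=
  (le_ciSup (f := fun k => |v k|) (Set.finite_range _).bddAbove k).trans (le_max_right _ _)

theorem norm_vand_sub_vand_le {K L : ℕ} {β βt : Fin K → ℂ} {ρ δ : ℝ} (hρ : 1 ≤ ρ)
    (hβ : ∀ k, ‖β k‖ ≤ ρ) (hβt : ∀ k, ‖βt k‖ ≤ ρ) (h : ∀ k, ‖β k - βt k‖ ≤ δ)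
    (ℓ : Fin L) (k : Fin K) :
    ‖vand L βt ℓ k - vand L β ℓ k‖ ≤ L * ρ ^ (L - 1) * δ := by
  have hℓ : (ℓ : ℕ) * ρ ^ ((ℓ : ℕ) - 1) ≤ L * ρ ^ (L - 1) := by
    gcongr <;> exact ℓ.isLt.le
  calc ‖vand L βt ℓ k - vand L β ℓ k‖ ≤ ℓ * ρ ^ ((ℓ : ℕ) - 1) * ‖βt k - β k‖ :=
        norm_pow_sub_pow_le (hβt k) (hβ k) _
    _ ≤ L * ρ ^ (L - 1) * δ :=
        mul_le_mul hℓ (norm_sub_rev (βt k) (β k) ▸ h k) (norm_nonneg _) (by positivity)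

/-- Perturbation of the Vandermonde matrix: if `‖β − β̃‖_∞ ≤ δ` then every absolute
row sum of `V_L(β̃) − V_L(β)` (hence the maximum-row-sum operator norm) is bounded
by `√2 · K · L · ρ_{|β|+δ𝟙}^{L−1} · δ`. -/
theorem vandermonde_perturbation {K L : ℕ} (β βt : Fin K → ℂ) (δ : ℝ)
    (h : ∀ k, ‖β k - βt k‖ ≤ δ) :
    ∀ ℓ : Fin L, ∑ k, ‖vand L βt ℓ k - vand L β ℓ k‖ ≤
      Real.sqrt 2 * K * L * rhoR (fun k => ‖β k‖ + δ) ^ (L - 1) * δ := by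
  intro ℓ
  set ρ := rhoR (fun k => ‖β k‖ + δ)
  have hβδ (k : Fin K) : ‖β k‖ + δ ≤ ρ :=
    (le_abs_self _).trans (abs_le_rhoR (fun k => ‖β k‖ + δ) k)
  have hβ (k : Fin K) : ‖β k‖ ≤ ρ := by linarith [hβδ k, (norm_nonneg _).trans (h k)]
  have hβt (k : Fin K) : ‖βt k‖ ≤ ρ := by
    linarith [hβδ k, h k, norm_le_norm_add_norm_sub' (βt k) (β k), norm_sub_rev (βt k) (β k)]
  have hentry : ∀ k ∈ univ, ‖vand L βt ℓ k - vand L β ℓ k‖ ≤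
      Real.sqrt 2 * (L * ρ ^ (L - 1) * δ) := fun k _ =>
    have hbound := norm_vand_sub_vand_le (one_le_rhoR _) hβ hβt h ℓ k
    hbound.trans <| le_mul_of_one_le_left ((norm_nonneg _).trans hbound)
      (Real.one_le_sqrt.mpr one_le_two)
  simpa [mul_assoc, mul_left_comm] using sum_le_card_nsmul _ _ _ hentry
end

section
/- Let λ_j, λ_k ∈ ℂ with λ_k real and positive, let β = λ_j·conj(λ_k), and let β̃ ∈ ℂ with |β̃ − β| ≤ δ where δ < |λ_j|·|λ_k|. Then the phase of the estimate λ̃_j := (β̃/|β̃|)·|λ̃_j| satisfies |arg(λ̃_j) − arg(λ_j) mod 2π| ≤ 2δ/(|λ_k|·|λ_j|), where the difference mod 2π is taken in [−π, π). -/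
/-!
Write `z = β̃ / β`. The angle `|arg z|` is the angle at `0` between `1` and `z`, and its sine is
the distance from `1` to the line `ℝ z`, hence at most `‖z - 1‖ ≤ δ / ‖β‖ < 1`. Since `re z > 0`
the angle is below `π / 2`, where `θ ≤ (π / 2) sin θ ≤ 2 sin θ`.
-/

open Real

lemma Real.abs_le_two_mul_abs_sin {x : ℝ} (hx : |x| ≤ π / 2) : |x| ≤ 2 * |sin x| := by
  have h := mul_abs_le_abs_sin hx
  rw [div_mul_eq_mul_div, div_le_iff₀ pi_pos] at h
  linarith [mul_le_mul_of_nonneg_left pi_le_four (abs_nonneg (sin x))]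

namespace Complex

lemma abs_im_le_norm_mul_norm_sub_one (z : ℂ) : |z.im| ≤ ‖z‖ * ‖z - 1‖ := by
  have hsq : (‖z‖ * ‖z - 1‖) ^ 2 = (normSq z - z.re) ^ 2 + z.im ^ 2 := by
    simp only [mul_pow, ← normSq_eq_norm_sq, normSq_apply, sub_re, sub_im, one_re, one_im]
    ring
  exact abs_le_of_sq_le_sq (by nlinarith [sq_nonneg (normSq z - z.re)]) (by positivity)

lemma abs_sin_arg_le_norm_sub_one (z : ℂ) : |Real.sin (arg z)| ≤ ‖z - 1‖ := by
  rcases eq_or_ne z 0 with rfl | hz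
  · simp
  rw [sin_arg, abs_div, abs_norm, div_le_iff₀ (norm_pos_iff.2 hz), mul_comm]
  exact abs_im_le_norm_mul_norm_sub_one z

lemma abs_arg_le_two_mul_norm_sub_one {z : ℂ} (hz : ‖z - 1‖ < 1) :
    |arg z| ≤ 2 * ‖z - 1‖ := by
  have hre : 0 ≤ z.re := by
    have := (abs_le.1 (abs_re_le_norm (z - 1))).1
    rw [sub_re, one_re] at this
    linarith
  calc |arg z| ≤ 2 * |Real.sin (arg z)| :=
        Real.abs_le_two_mul_abs_sin (abs_arg_le_pi_div_two_iff.2 hre)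
    _ ≤ 2 * ‖z - 1‖ := by gcongr; exact abs_sin_arg_le_norm_sub_one z

lemma abs_arg_div_le {w v : ℂ} (h : ‖w - v‖ < ‖v‖) :
    |arg (w / v)| ≤ 2 * ‖w - v‖ / ‖v‖ := by
  have hv : v ≠ 0 := norm_pos_iff.1 ((norm_nonneg _).trans_lt h)
  have hdiv : ‖w / v - 1‖ = ‖w - v‖ / ‖v‖ := by
    rw [div_sub_one hv, norm_div]
  rw [mul_div_assoc, ← hdiv]
  exact abs_arg_le_two_mul_norm_sub_one (by rwa [hdiv, div_lt_one (norm_pos_iff.2 hv)])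

end Complex

theorem phase_estimate_error_general (lamj : ℂ) (lamk : ℝ) (hk : 0 < lamk)
    (βt : ℂ) (δ : ℝ) (h : ‖βt - lamj * (lamk : ℂ)‖ ≤ δ) (hδ : δ < ‖lamj‖ * lamk) :
    |Complex.arg (βt / (lamj * (lamk : ℂ)))| ≤ 2 * δ / (lamk * ‖lamj‖) := by
  have hβ : ‖lamj * (lamk : ℂ)‖ = lamk * ‖lamj‖ := by
    rw [norm_mul, Complex.norm_real, norm_of_nonneg hk.le, mul_comm]
  calc |Complex.arg (βt / (lamj * (lamk : ℂ)))|
      ≤ 2 * ‖βt - lamj * (lamk : ℂ)‖ / ‖lamj * (lamk : ℂ)‖ :=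
        Complex.abs_arg_div_le (by rw [hβ, mul_comm lamk]; linarith)
    _ ≤ 2 * δ / (lamk * ‖lamj‖) := by rw [hβ]; gcongr

/-- Sensitivity of the phase estimate: let `λ_j ∈ ℂ \ {0}`, `λ_k > 0` real, so that
`β = λ_j·conj(λ_k) = λ_j·λ_k` carries the phase of `λ_j`.  If `β̃` satisfies
`|β̃ − β| ≤ δ < |λ_j|·|λ_k|`, then the phase of the estimate differs from
`arg(λ_j)` (modulo `2π`, represented by `arg(β̃/β)`) by at most `2δ/(|λ_k|·|λ_j|)`. -/
theorem phase_estimate_error (lamj : ℂ) (hj : lamj ≠ 0) (lamk : ℝ) (hk : 0 < lamk)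
    (βt : ℂ) (δ : ℝ) (h : ‖βt - lamj * (lamk : ℂ)‖ ≤ δ) (hδ : δ < ‖lamj‖ * lamk) :
    |Complex.arg (βt / (lamj * (lamk : ℂ)))| ≤ 2 * δ / (lamk * ‖lamj‖) :=
  phase_estimate_error_general lamj lamk hk βt δ h hδ
end

section
/- Let h_ℓ = ∑_{k=0}^{K-1} η_k β_k^ℓ with nonzero coefficients η_k and pairwise distinct nonzero bases β_k, and let H = (h_{ℓ+k})_{ℓ=0..L−K−1,k=0..K} for L ≥ 2K. For γ ∈ ℂ^{K+1}, the vector γ lies in ker(H) if and only if the polynomial P(z) = ∑_{k=0}^K γ_k z^k vanishes at every base β_0,…,β_{K−1}. In particular, ker(H) is one-dimensional, spanned by the coefficient vector of the Prony polynomial ∏_{k=0}^{K-1}(z − β_k). -/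
/-!
Writing `P = ∑ γ_k X^k`, the Hankel structure gives `(Hγ)_ℓ = ∑_j η_j P(β_j) β_j^ℓ`, i.e.
`Hγ = V (η_j P(β_j))_j` with `V` the `(L - K) × K` Vandermonde matrix of the `β_j`. Since
`L - K ≥ K` and the `β_j` are distinct, `V` has trivial kernel, and as the `η_j` are nonzero,
`Hγ = 0` iff `P(β_j) = 0` for all `j`. A polynomial of degree `≤ K` vanishing at the `K` distinct
`β_j` is a multiple of `∏ (X - β_j)` (the difference with `coeff K • ∏ (X - β_j)` has degree `< K`).
-/

open Finset Matrix Polynomial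

namespace Polynomial

variable {R : Type*} [CommRing R]

theorem eval_ofFn [DecidableEq R] {n : ℕ} (v : Fin n → R) (x : R) :
    (ofFn n v).eval x = ∑ k, v k * x ^ (k : ℕ) := by
  simp [ofFn_eq_sum_monomial, eval_finsetSum]

theorem eq_C_coeff_mul_prod_X_sub_C [IsDomain R] {K : ℕ} {β : Fin K → R}
    (hβ : Function.Injective β) {Q : R[X]} (hQ : Q.natDegree ≤ K)
    (hQβ : ∀ j, Q.eval (β j) = 0) :
    Q = C (Q.coeff K) * ∏ j, (X - C (β j)) := by
  set p : R[X] := ∏ j, (X - C (β j))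
  have hp : p.Monic ∧ p.natDegree = K := ⟨monic_prod_X_sub_C _ _, by simp [p]⟩
  refine eq_of_degree_sub_lt_of_eval_index_eq univ hβ.injOn ?_ fun j _ => ?_
  · rw [card_univ, Fintype.card_fin, degree_lt_iff_coeff_zero]
    intro m hm
    obtain rfl | hm := eq_or_lt_of_le hm
    · simp [← hp.2, hp.1.coeff_natDegree]
    · simp [coeff_eq_zero_of_natDegree_lt (hQ.trans_lt hm),
        coeff_eq_zero_of_natDegree_lt (hp.2.trans_lt hm)]
  · simp [p, hQβ, eval_prod, prod_eq_zero (mem_univ j)]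

theorem forall_eval_eq_zero_iff_exists_eq_C_mul_prod [IsDomain R] {K : ℕ} {β : Fin K → R}
    (hβ : Function.Injective β) {Q : R[X]} (hQ : Q.natDegree ≤ K) :
    (∀ j, Q.eval (β j) = 0) ↔ ∃ t, Q = C t * ∏ j, (X - C (β j)) := by
  refine ⟨fun hQβ => ⟨_, eq_C_coeff_mul_prod_X_sub_C hβ hQ hQβ⟩, ?_⟩
  rintro ⟨t, rfl⟩ j
  simp [eval_prod, prod_eq_zero (mem_univ j)]

end Polynomial

namespace Matrix

theorem eq_zero_of_forall_pow_sum_mul_pow_eq_zero_of_le {R : Type*} [CommRing R] [IsDomain R]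
    {K m : ℕ} (hKm : K ≤ m) {β c : Fin K → R} (hβ : Function.Injective β)
    (hc : ∀ ℓ : Fin m, ∑ j, c j * β j ^ (ℓ : ℕ) = 0) : c = 0 :=
  eq_zero_of_forall_pow_sum_mul_pow_eq_zero hβ fun i => hc (Fin.castLE hKm i)

end Matrix

section Hankel

variable {R : Type*} [CommRing R] {K m n : ℕ} {β η : Fin K → R} {H : Matrix (Fin m) (Fin n) R}

theorem hankel_mulVec_apply (hH : ∀ ℓ k, H ℓ k = ∑ j, η j * β j ^ ((ℓ : ℕ) + k))
    (γ : Fin n → R) (ℓ : Fin m) :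
    (H *ᵥ γ) ℓ = ∑ j, (η j * ∑ k, γ k * β j ^ (k : ℕ)) * β j ^ (ℓ : ℕ) := by
  simp only [mulVec, dotProduct, hH, sum_mul, mul_sum, pow_add]
  rw [sum_comm]
  exact sum_congr rfl fun j _ => sum_congr rfl fun k _ => by ring

theorem hankel_mulVec_eq_zero_iff [IsDomain R] (hKm : K ≤ m) (hβ : Function.Injective β)
    (hη : ∀ j, η j ≠ 0) (hH : ∀ ℓ k, H ℓ k = ∑ j, η j * β j ^ ((ℓ : ℕ) + k))
    (γ : Fin n → R) :
    H *ᵥ γ = 0 ↔ ∀ j, ∑ k, γ k * β j ^ (k : ℕ) = 0 := by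
  refine ⟨fun hγ j => ?_, fun hγ => funext fun ℓ => by simp [hankel_mulVec_apply hH, hγ]⟩
  have hc := eq_zero_of_forall_pow_sum_mul_pow_eq_zero_of_le hKm hβ fun ℓ => by
    rw [← hankel_mulVec_apply hH, hγ, Pi.zero_apply]
  exact (mul_eq_zero.mp (congrFun hc j)).resolve_left (hη j)

end Hankel

theorem prony_hankel_kernel_general {K L : ℕ} (hL : 2 * K ≤ L)
    (β η : Fin K → ℂ) (hβ : Function.Injective β)
    (hη : ∀ k, η k ≠ 0)
    (h : ℕ → ℂ) (hdef : ∀ ℓ : ℕ, h ℓ = ∑ k, η k * β k ^ ℓ)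
    (H : Matrix (Fin (L - K)) (Fin (K + 1)) ℂ)
    (hH : ∀ (ℓ : Fin (L - K)) (k : Fin (K + 1)), H ℓ k = h (ℓ.1 + k.1)) :
    (∀ γ : Fin (K + 1) → ℂ,
        H.mulVec γ = 0 ↔ ∀ j : Fin K, ∑ k, γ k * β j ^ (k : ℕ) = 0) ∧
      {γ : Fin (K + 1) → ℂ | H.mulVec γ = 0} =
        Set.range (fun t : ℂ =>
          t • (fun k : Fin (K + 1) => (∏ j, (X - C (β j))).coeff (k : ℕ) : Fin (K + 1) → ℂ)) := by
  have hker : ∀ γ : Fin (K + 1) → ℂ, H *ᵥ γ = 0 ↔ ∀ j, ∑ k, γ k * β j ^ (k : ℕ) = 0 :=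
    hankel_mulVec_eq_zero_iff (by omega) hβ hη fun ℓ k => (hH ℓ k).trans (hdef _)
  refine ⟨hker, Set.ext fun γ => ?_⟩
  set p : ℂ[X] := ∏ j, (X - C (β j))
  have hp : p.natDegree < K + 1 := by simp [p]
  have hγ : (ofFn (K + 1) γ).natDegree ≤ K :=
    Nat.le_of_lt_succ (ofFn_natDegree_lt K.succ_pos γ)
  calc H *ᵥ γ = 0 ↔ ∀ j, (ofFn (K + 1) γ).eval (β j) = 0 := by simp only [hker, eval_ofFn]
    _ ↔ ∃ t, ofFn (K + 1) γ = C t * p := forall_eval_eq_zero_iff_exists_eq_C_mul_prod hβ hγ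
    _ ↔ ∃ t, t • toFn (K + 1) p = γ := by
      refine exists_congr fun t => ?_
      rw [← (injective_ofFn (K + 1)).eq_iff, map_smul, ofFn_comp_toFn_eq_id_of_natDegree_lt hp,
        smul_eq_C_mul, eq_comm]

/-- Kernel of the Prony–Hankel matrix: for samples `h_ℓ = ∑_k η_k β_k^ℓ` of an
exponential sum with nonzero coefficients and pairwise distinct nonzero bases, a
vector `γ` lies in the kernel of the Hankel matrix `H = (h_{ℓ+k})` iff the
polynomial `P(z) = ∑_k γ_k z^k` vanishes at every base; in particular the kernel
is the line spanned by the coefficient vector of the Prony polynomial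
`∏_k (z − β_k)`. -/
theorem prony_hankel_kernel {K L : ℕ} (hK : 1 ≤ K) (hL : 2 * K ≤ L)
    (β η : Fin K → ℂ) (hβ0 : ∀ k, β k ≠ 0) (hβ : Function.Injective β)
    (hη : ∀ k, η k ≠ 0)
    (h : ℕ → ℂ) (hdef : ∀ ℓ : ℕ, h ℓ = ∑ k, η k * β k ^ ℓ)
    (H : Matrix (Fin (L - K)) (Fin (K + 1)) ℂ)
    (hH : ∀ (ℓ : Fin (L - K)) (k : Fin (K + 1)), H ℓ k = h (ℓ.1 + k.1)) :
    (∀ γ : Fin (K + 1) → ℂ,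
        H.mulVec γ = 0 ↔ ∀ j : Fin K, ∑ k, γ k * β j ^ (k : ℕ) = 0) ∧
      {γ : Fin (K + 1) → ℂ | H.mulVec γ = 0} =
        Set.range (fun t : ℂ =>
          t • (fun k : Fin (K + 1) => (∏ j, (X - C (β j))).coeff (k : ℕ) : Fin (K + 1) → ℂ)) :=
  prony_hankel_kernel_general hL β η hβ hη h hdef H hH
end

section
/- For β ∈ ℂ^K with pairwise distinct entries, the inverse of the square Vandermonde matrix V(β) = (β_k^ℓ)_{ℓ,k=0}^{K−1} satisfies ‖V(β)^{−1}‖_∞ ≤ π_β / σ_β^{K−1}, where ‖·‖_∞ is the maximum-row-sum norm, π_β = ∏_{k=0}^{K-1}(1+|β_k|), and σ_β = min_{ℓ<k}|β_ℓ − β_k|. -/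
open Finset Matrix

/-- The square Vandermonde matrix `V(β) = (β_k^ℓ)_{ℓ,k=0}^{K−1}`. -/
noncomputable def vandSq {K : ℕ} (β : Fin K → ℂ) : Matrix (Fin K) (Fin K) ℂ :=
  fun ℓ k => β k ^ (ℓ : ℕ)

/-- The minimal separation `σ_β = min_{ℓ<k} |β_ℓ − β_k|`. -/
noncomputable def minSep {K : ℕ} (β : Fin K → ℂ) : ℝ :=
  sInf {d : ℝ | ∃ l k : Fin K, l < k ∧ d = ‖β l - β k‖}

/-!
Row `ℓ` of `V(β)⁻¹` holds the coefficients of the Lagrange basis polynomial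
`L_ℓ = w_ℓ · ∏_{j ≠ ℓ} (X - β_j)`, with nodal weight `w_ℓ = ∏_{j ≠ ℓ} (β_ℓ - β_j)⁻¹`.
Multiplying by `X - a` at most multiplies the ℓ¹-norm of the coefficients by `1 + ‖a‖`,
so the coefficients of `∏_{j ≠ ℓ} (X - β_j)` have ℓ¹-norm at most `∏ (1 + ‖β_j‖)` (Gautschi),
while `‖w_ℓ‖ ≤ σ_β^{-(K-1)}` since every factor `‖β_ℓ - β_j‖` is at least `σ_β`.
-/

open Polynomial Lagrange

section CoeffNorm

variable {R : Type*}

theorem sum_range_norm_coeff_X_mul_le [SeminormedRing R] (p : R[X]) (n : ℕ) :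
    ∑ k ∈ range n, ‖(X * p).coeff k‖ ≤ ∑ k ∈ range n, ‖p.coeff k‖ := by
  cases n with
  | zero => simp
  | succ n =>
    rw [sum_range_succ', coeff_X_mul_zero, norm_zero, add_zero]
    simp only [coeff_X_mul]
    exact sum_le_sum_of_subset_of_nonneg (range_subset_range.mpr n.le_succ)
      fun _ _ _ => norm_nonneg _

theorem sum_range_norm_coeff_X_sub_C_mul_le [SeminormedRing R] (a : R) (p : R[X]) (n : ℕ) :
    ∑ k ∈ range n, ‖((X - C a) * p).coeff k‖ ≤ (1 + ‖a‖) * ∑ k ∈ range n, ‖p.coeff k‖ :=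
  calc ∑ k ∈ range n, ‖((X - C a) * p).coeff k‖
      ≤ ∑ k ∈ range n, (‖(X * p).coeff k‖ + ‖a‖ * ‖p.coeff k‖) := by
        gcongr with k
        rw [sub_mul, coeff_sub, coeff_C_mul]
        exact (norm_sub_le _ _).trans (add_le_add_right (norm_mul_le _ _) _)
    _ ≤ (1 + ‖a‖) * ∑ k ∈ range n, ‖p.coeff k‖ := by
        rw [sum_add_distrib, ← mul_sum]
        linarith [sum_range_norm_coeff_X_mul_le p n]

theorem sum_range_norm_coeff_nodal_le [SeminormedCommRing R] [NormOneClass R] {ι : Type*}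
    (s : Finset ι) (v : ι → R) (n : ℕ) :
    ∑ k ∈ range n, ‖(nodal s v).coeff k‖ ≤ ∏ i ∈ s, (1 + ‖v i‖) := by
  classical
  induction s using Finset.induction_on with
  | empty =>
    cases n with
    | zero => simp
    | succ n => simp [sum_range_succ', coeff_one]
  | insert i s hi ih =>
    rw [nodal_insert_eq_nodal hi, prod_insert hi]
    exact (sum_range_norm_coeff_X_sub_C_mul_le _ _ _).trans
      (mul_le_mul_of_nonneg_left ih (by positivity))

end CoeffNorm

theorem Lagrange.basis_eq_C_nodalWeight_mul_nodal_erase {F ι : Type*} [Field F] [DecidableEq ι]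
    (s : Finset ι) (v : ι → F) (i : ι) :
    Lagrange.basis s v i = C (nodalWeight s v i) * nodal (s.erase i) v := by
  simp_rw [Lagrange.basis, basisDivisor, nodalWeight, prod_mul_distrib, map_prod, nodal]

theorem inv_vandermonde_transpose_apply {F : Type*} [Field F] {n : ℕ} {v : Fin n → F}
    (hv : Function.Injective v) (i k : Fin n) :
    (vandermonde v)ᵀ⁻¹ i k = (Lagrange.basis univ v i).coeff k := by
  set L : Matrix (Fin n) (Fin n) F := .of fun i k => (Lagrange.basis univ v i).coeff k
  suffices L * (vandermonde v)ᵀ = 1 by rw [inv_eq_left_inv this]; rfl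
  ext i j
  have hdeg : (Lagrange.basis univ v i).natDegree < n := by
    rw [natDegree_basis hv.injOn (mem_univ i), card_univ, Fintype.card_fin]
    exact Nat.sub_lt i.pos one_pos
  rw [mul_apply]
  simp only [L, of_apply, transpose_apply, vandermonde_apply]
  rw [Fin.sum_univ_eq_sum_range (fun m => (Lagrange.basis univ v i).coeff m * v j ^ m),
    ← eval_eq_sum_range' hdeg]
  rcases eq_or_ne i j with rfl | hij
  · rw [eval_basis_self hv.injOn (mem_univ i), one_apply_eq]
  · rw [eval_basis_of_ne hij (mem_univ j), one_apply_ne hij]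

theorem vandSq_eq_vandermonde_transpose {K : ℕ} (β : Fin K → ℂ) :
    vandSq β = (vandermonde β)ᵀ := rfl

section MinSep

variable {K : ℕ} {β : Fin K → ℂ}

theorem minSep_le_norm_sub {i j : Fin K} (hij : i ≠ j) : minSep β ≤ ‖β i - β j‖ := by
  have hbdd : BddBelow {d : ℝ | ∃ l k : Fin K, l < k ∧ d = ‖β l - β k‖} :=
    ⟨0, by rintro _ ⟨l, k, -, rfl⟩; exact norm_nonneg _⟩
  rcases hij.lt_or_gt with h | h
  · exact csInf_le hbdd ⟨i, j, h, rfl⟩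
  · rw [norm_sub_rev]
    exact csInf_le hbdd ⟨j, i, h, rfl⟩

theorem minSep_pos (hβ : Function.Injective β) {i j : Fin K} (hij : i ≠ j) : 0 < minSep β := by
  set S := {d : ℝ | ∃ l k : Fin K, l < k ∧ d = ‖β l - β k‖}
  have hne : S.Nonempty := ⟨_, min i j, max i j, min_lt_max.mpr hij, rfl⟩
  have hfin : S.Finite := (Set.finite_range fun p : Fin K × Fin K => ‖β p.1 - β p.2‖).subset <| by
    rintro _ ⟨l, k, -, rfl⟩
    exact ⟨(l, k), rfl⟩
  obtain ⟨l, k, hlk, hmin⟩ := hne.csInf_mem hfin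
  rw [minSep, hmin]
  exact norm_pos_iff.mpr (sub_ne_zero.mpr (hβ.ne hlk.ne))

theorem norm_nodalWeight_le (hβ : Function.Injective β) (i : Fin K) :
    ‖nodalWeight univ β i‖ ≤ (minSep β ^ (K - 1))⁻¹ := by
  have hcard : (univ.erase i).card = K - 1 := by simp
  rw [nodalWeight, norm_prod, ← hcard, ← prod_const, ← prod_inv_distrib]
  refine prod_le_prod (fun _ _ => norm_nonneg _) fun j hj => ?_
  have hji := (mem_erase.mp hj).1
  rw [norm_inv]
  exact inv_anti₀ (minSep_pos hβ hji) (minSep_le_norm_sub hji.symm)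

end MinSep

theorem inverse_vandermonde_bound_general {K : ℕ} (β : Fin K → ℂ)
    (hβ : Function.Injective β) :
    ∀ ℓ : Fin K, ∑ k, ‖(vandSq β)⁻¹ ℓ k‖ ≤ (∏ k, (1 + ‖β k‖)) / minSep β ^ (K - 1) := by
  intro ℓ
  have hrow : ∑ k, ‖(vandSq β)⁻¹ ℓ k‖
      = ‖nodalWeight univ β ℓ‖ * ∑ k ∈ range K, ‖(nodal (univ.erase ℓ) β).coeff k‖ := by
    simp_rw [vandSq_eq_vandermonde_transpose, inv_vandermonde_transpose_apply hβ,
      basis_eq_C_nodalWeight_mul_nodal_erase, coeff_C_mul, norm_mul, ← mul_sum]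
    rw [Fin.sum_univ_eq_sum_range (fun k => ‖(nodal (univ.erase ℓ) β).coeff k‖)]
  have hprod : ∏ j ∈ univ.erase ℓ, (1 + ‖β j‖) ≤ ∏ k, (1 + ‖β k‖) :=
    prod_le_prod_of_subset_of_one_le (erase_subset _ _) (fun _ _ => by positivity)
      fun _ _ _ => le_add_of_nonneg_right (norm_nonneg _)
  rw [hrow, div_eq_inv_mul]
  exact mul_le_mul (norm_nodalWeight_le hβ ℓ)
    ((sum_range_norm_coeff_nodal_le _ _ _).trans hprod) (sum_nonneg fun _ _ => norm_nonneg _)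
    ((norm_nonneg _).trans (norm_nodalWeight_le hβ ℓ))

/-- Bound on the inverse Vandermonde matrix: for pairwise distinct entries, every
absolute row sum of `V(β)⁻¹` (hence the maximum-row-sum operator norm) is bounded
by `π_β / σ_β^{K−1}` with `π_β = ∏ (1+|β_k|)`. -/
theorem inverse_vandermonde_bound {K : ℕ} (hK : 1 ≤ K) (β : Fin K → ℂ)
    (hβ : Function.Injective β) :
    ∀ ℓ : Fin K, ∑ k, ‖(vandSq β)⁻¹ ℓ k‖ ≤ (∏ k, (1 + ‖β k‖)) / minSep β ^ (K - 1) :=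
  inverse_vandermonde_bound_general β hβ
end

section
/- Let A = S Λ S^{−1} ∈ ℂ^{d×d} be diagonalizable with collision-free eigenvalues (all products λ_j·conj(λ_k), j,k ∈ {0,…,d−1}, pairwise distinct), and let φ ∈ ℂ^d be such that ψ = S^{−1}φ has no zero component. If x, x' ∈ ℂ^d satisfy |⟨x, A^ℓ φ⟩| = |⟨x', A^ℓ φ⟩| for all ℓ = 0,…,d²−1, then x' = e^{iθ}·x for some θ ∈ ℝ. -/
/-!
Writing `A = SΛS⁻¹` and `ψ = S⁻¹φ`, the sample `⟨x, A^ℓ φ⟩` is the exponential sum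
`∑ₖ cₖ conj(λₖ)^ℓ` with `cₖ = (S*x)ₖ conj(ψₖ)`, so its squared modulus is an exponential sum with
the `d²` bases `conj(λⱼ) λₖ` and coefficients `cⱼ conj(cₖ)`. Collision-freeness makes these bases
distinct, so `d²` samples determine the coefficients through an invertible Vandermonde system.
The rank-one matrix `(cⱼ conj(cₖ))` determines `c` up to a unimodular factor, and since `ψ` has no
zeros and `S*` is invertible, so is `x`.
-/

open Finset Matrix

/-- The inner product `⟨u, v⟩ = ∑ u_k conj(v_k)` on `ℂ^d`. -/
noncomputable def ip {d : ℕ} (u v : Fin d → ℂ) : ℂ :=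
  ∑ k, u k * star (v k)

theorem Matrix.conj_diagonal_pow {n R : Type*} [Fintype n] [DecidableEq n] [CommRing R]
    {S : Matrix n n R} (hS : IsUnit S.det) (lam : n → R) (ℓ : ℕ) :
    (S * diagonal lam * S⁻¹) ^ ℓ = S * diagonal (lam ^ ℓ) * S⁻¹ := by
  rw [← diagonal_pow]
  exact Units.conj_pow (nonsingInvUnit S hS) _ ℓ

theorem ip_mulVec {m n : ℕ} (u : Fin m → ℂ) (M : Matrix (Fin m) (Fin n) ℂ) (v : Fin n → ℂ) :
    ip u (M *ᵥ v) = ip (Mᴴ *ᵥ u) v := by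
  change u ⬝ᵥ star (M *ᵥ v) = (Mᴴ *ᵥ u) ⬝ᵥ star v
  rw [star_mulVec, dotProduct_comm, ← dotProduct_mulVec, dotProduct_comm]

theorem sum_mul_pow_mul_star_self {ι R : Type*} [Fintype ι] [CommSemiring R] [StarRing R]
    (c w : ι → R) (ℓ : ℕ) :
    (∑ k, c k * w k ^ ℓ) * star (∑ k, c k * w k ^ ℓ) =
      ∑ p : ι × ι, c p.1 * star (c p.2) * (w p.1 * star (w p.2)) ^ ℓ := by
  rw [star_sum, sum_mul_sum, Fintype.sum_prod_type]
  refine sum_congr rfl fun j _ => sum_congr rfl fun k _ => ?_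
  rw [star_mul', star_pow, mul_pow]
  ring

theorem eq_of_forall_sum_mul_pow_eq {ι R : Type*} [Fintype ι] [CommRing R] [IsDomain R]
    {μ a b : ι → R} (hμ : Function.Injective μ)
    (h : ∀ ℓ < Fintype.card ι, ∑ i, a i * μ i ^ ℓ = ∑ i, b i * μ i ^ ℓ) : a = b := by
  let e := (Fintype.equivFin ι).symm
  have hab : (a - b) ∘ e = 0 := by
    refine eq_zero_of_forall_pow_sum_mul_pow_eq_zero (hμ.comp e.injective) fun ℓ => ?_
    simp only [Function.comp_apply, Pi.sub_apply, sub_mul, sum_sub_distrib]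
    rw [e.sum_comp (fun i => a i * μ i ^ (ℓ : ℕ)), e.sum_comp (fun i => b i * μ i ^ (ℓ : ℕ)),
      h ℓ ℓ.isLt, sub_self]
  funext i
  simpa [sub_eq_zero] using congrFun hab (e.symm i)

theorem exists_exp_smul_of_mul_star_eq {ι : Type*} {c c' : ι → ℂ}
    (h : ∀ j k, c j * star (c k) = c' j * star (c' k)) :
    ∃ θ : ℝ, c' = Complex.exp (θ * Complex.I) • c := by
  by_cases hc : c = 0
  · refine ⟨0, funext fun k => ?_⟩
    simpa [hc] using (h k k).symm
  obtain ⟨j, hj⟩ := Function.ne_iff.1 hc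
  have hnorm : ‖c j‖ = ‖c' j‖ := by
    have := h j j
    simp only [Complex.star_def, Complex.mul_conj'] at this
    exact_mod_cast (sq_eq_sq₀ (norm_nonneg _) (norm_nonneg _)).1 (by exact_mod_cast this)
  have hj' : star (c' j) ≠ 0 := by
    rw [star_ne_zero, ← norm_ne_zero_iff, ← hnorm, norm_ne_zero_iff]
    exact hj
  obtain ⟨θ, hθ⟩ := (Complex.norm_eq_one_iff (star (c j) / star (c' j))).1 (by
    rw [norm_div, norm_star, norm_star, hnorm, div_self (norm_ne_zero_iff.2 (star_ne_zero.1 hj'))])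
  refine ⟨θ, funext fun k => ?_⟩
  rw [Pi.smul_apply, smul_eq_mul, hθ, div_mul_eq_mul_div, eq_div_iff hj', mul_comm (star _)]
  exact (h k j).symm

theorem ip_pow_mulVec_eq_sum {d : ℕ} {A S : Matrix (Fin d) (Fin d) ℂ} {lam : Fin d → ℂ}
    (hS : IsUnit S.det) (hA : A = S * diagonal lam * S⁻¹) (φ y : Fin d → ℂ) (ℓ : ℕ) :
    ip y ((A ^ ℓ) *ᵥ φ) = ∑ k, (Sᴴ *ᵥ y) k * star ((S⁻¹ *ᵥ φ) k) * star (lam k) ^ ℓ := by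
  rw [hA, conj_diagonal_pow hS, ← mulVec_mulVec, ← mulVec_mulVec, ip_mulVec]
  simp only [ip, mulVec_diagonal, Pi.pow_apply, star_mul', star_pow, mul_assoc,
    mul_comm (star ((S⁻¹ *ᵥ φ) _))]

/-- Uniqueness of phase retrieval in dynamical sampling: let `A = SΛS⁻¹` have
collision-free eigenvalues (the `d²` products `λ_j conj(λ_k)` are pairwise
distinct) and let `ψ = S⁻¹φ` have no zero component.  If two signals `x, x'`
produce the same phaseless samples `|⟨·, A^ℓ φ⟩|` for `ℓ = 0, …, d²−1`, then
`x' = e^{iθ} x` for some `θ ∈ ℝ`. -/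
theorem phase_retrieval_uniqueness {d : ℕ}
    (A S : Matrix (Fin d) (Fin d) ℂ) (lam : Fin d → ℂ) (hS : IsUnit S.det)
    (hA : A = S * Matrix.diagonal lam * S⁻¹)
    (hcf : Function.Injective (fun p : Fin d × Fin d => lam p.1 * star (lam p.2)))
    (φ : Fin d → ℂ) (hφ : ∀ k, S⁻¹.mulVec φ k ≠ 0)
    (x x' : Fin d → ℂ)
    (hsamp : ∀ ℓ : ℕ, ℓ < d ^ 2 →
      ‖ip x ((A ^ ℓ).mulVec φ)‖ = ‖ip x' ((A ^ ℓ).mulVec φ)‖) :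
    ∃ θ : ℝ, x' = Complex.exp (θ * Complex.I) • x := by
  let coeff (y : Fin d → ℂ) (k : Fin d) : ℂ := (Sᴴ *ᵥ y) k * star ((S⁻¹ *ᵥ φ) k)
  let w (k : Fin d) : ℂ := star (lam k)
  have hbases : Function.Injective fun p : Fin d × Fin d => w p.1 * star (w p.2) :=
    fun p q h => Prod.swap_injective <| hcf <| by simpa [w, mul_comm] using h
  have hgram : (fun p : Fin d × Fin d => coeff x p.1 * star (coeff x p.2)) =
      fun p => coeff x' p.1 * star (coeff x' p.2) := by
    refine eq_of_forall_sum_mul_pow_eq hbases fun ℓ hℓ => ?_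
    rw [Fintype.card_prod, Fintype.card_fin, ← sq] at hℓ
    rw [← sum_mul_pow_mul_star_self (coeff x) w, ← sum_mul_pow_mul_star_self (coeff x') w,
      ← ip_pow_mulVec_eq_sum hS hA, ← ip_pow_mulVec_eq_sum hS hA]
    simp only [Complex.star_def, Complex.mul_conj', hsamp ℓ hℓ]
  obtain ⟨θ, hθ⟩ := exists_exp_smul_of_mul_star_eq fun j k => congrFun hgram (j, k)
  have hSH : IsUnit Sᴴ := by
    rw [isUnit_iff_isUnit_det, det_conjTranspose]
    exact hS.star
  refine ⟨θ, mulVec_injective_of_isUnit hSH (funext fun k => ?_)⟩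
  rw [mulVec_smul]
  exact mul_right_cancel₀ (star_ne_zero.2 (hφ k)) (by simpa [coeff, mul_assoc] using congrFun hθ k)
end
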